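/- Let (Q_n,0), (Q_n,1) be the two halves of Q_{n+1}, n ≥ 2. Let G' be a Hamiltonian subgraph of (Q_n,0), R' the cross edges between (Q_n,1) and G', and G = (Q_n,1) ∪ R' ∪ G'. Then G is bipancyclic: G contains a cycle of every even length l with 4 ≤ l ≤ 2^n + |V(G')|. -/

import Mathlib

def Q (n : ℕ) : SimpleGraph (Fin n → ZMod 2) where
  Adj x y := hammingDist x y = 1
  symm := ⟨fun x y h => by
    have h' : hammingDist x y = 1 := h
    show hammingDist y x = 1
    rwa [hammingDist_comm]⟩
  loopless := ⟨fun x h => by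
    have h' : hammingDist x x = 1 := h
    simp [hammingDist_self] at h'⟩

/-- `G` is bipancyclic: it contains a cycle of every even length `l` with `4 ≤ l ≤ |V(G)|`. -/
def Bipancyclic {V : Type*} (G : SimpleGraph V) : Prop :=
  ∀ l : ℕ, 4 ≤ l → l ≤ Nat.card V → Even l →
    ∃ (v : V) (c : G.Walk v v), c.IsCycle ∧ c.length = l

/-- The half `(Q_n, t)` of `Q_{n+1}`: vertices whose last coordinate equals `t`. -/
def half (n : ℕ) (t : ZMod 2) : Set (Fin (n+1) → ZMod 2) := {v | v (Fin.last n) = t}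

/-- A cross edge of `Q_{n+1}`: an edge whose endpoints differ in the last coordinate. -/
def crossAdj (n : ℕ) (u v : Fin (n+1) → ZMod 2) : Prop :=
  (Q (n+1)).Adj u v ∧ u (Fin.last n) ≠ v (Fin.last n)

/-- The subgraph `G = (Q_n,1) ∪ R' ∪ G'` of `Q_{n+1}`, where `G'` is a subgraph of the half
`(Q_n,0)` and `R'` is the set of cross edges between the half `(Q_n,1)` and `G'`. -/
def mix (n : ℕ) (G' : (Q (n+1)).Subgraph) : (Q (n+1)).Subgraph where
  verts := half n 1 ∪ G'.verts
  Adj u v := G'.Adj u v ∨ ((Q (n+1)).Adj u v ∧ u ∈ half n 1 ∧ v ∈ half n 1) ∨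
    (crossAdj n u v ∧ ((u ∈ G'.verts ∧ v ∈ half n 1) ∨ (v ∈ G'.verts ∧ u ∈ half n 1)))
  adj_sub := fun h => by
    rcases h with h | h | h
    · exact G'.adj_sub h
    · exact h.1
    · exact h.1.1
  edge_vert := fun h => by
    rcases h with h | h | h
    · exact Or.inr (G'.edge_vert h)
    · exact Or.inl h.2.1
    · rcases h.2 with ⟨hu, _⟩ | ⟨_, hu⟩
      · exact Or.inr hu
      · exact Or.inl hu
  symm := ⟨fun u v h => by
    rcases h with h | h | h
    · exact Or.inl (G'.adj_symm h)
    · exact Or.inr (Or.inl ⟨h.1.symm, h.2.2, h.2.1⟩)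
    · exact Or.inr (Or.inr ⟨⟨h.1.1.symm, h.1.2.symm⟩, h.2.symm⟩)⟩

/-!
The hypercube is bipanconnected: two distinct vertices of `Q n` at Hamming distance `d` are
joined by paths of every length `k ≡ d (mod 2)` with `d ≤ k < 2 ^ n`. By induction on `n`, split
`Q (n + 1)` into its two halves: a path either stays in one half, or is a path in one half
followed by a cross edge and a path in the other; a long path inside one half replaces the first
edge of a long path of that half by a detour through the other half.

A cycle of length `l ≤ 2 ^ n` then lies in the half `(Q_n, 1)`: a path of length `l - 1` between
neighbours. A longer even cycle opens the Hamiltonian cycle of `G'` at an edge `vw` (it has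
`|V(G')|` vertices, an even number since `Q` is bipartite) and closes it by the cross edges at `v`
and `w` and a path of length `l - |V(G')| - 1` between their neighbours in `(Q_n, 1)`.
-/

open SimpleGraph Walk

namespace SimpleGraph.Walk

variable {V : Type*} {G : SimpleGraph V}

lemma IsPath.append_cons_of_disjoint {u v x w : V} {p : G.Walk u v} {q : G.Walk x w}
    (hp : p.IsPath) (hq : q.IsPath) (h : G.Adj v x) (hpq : p.support.Disjoint q.support) :
    (p.append (cons h q)).IsPath := by
  rw [isPath_def, support_append, support_cons, List.tail_cons]
  exact hp.support_nodup.append hq.support_nodup hpq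

lemma IsPath.isCycle_cons_append_cons {a b c d : V} {p : G.Walk a b} {q : G.Walk c d}
    (hp : p.IsPath) (hq : q.IsPath) (hpq : p.support.Disjoint q.support) (h₁ : G.Adj d a)
    (h₂ : G.Adj b c) (hlen : 0 < p.length + q.length) :
    ((cons h₁ p).append (cons h₂ q)).IsCycle :=
  (hp.cons fun h => hpq h q.end_mem_support).isCycle_append
    (hq.cons fun h => hpq p.end_mem_support h) (by simpa using hpq)
    (by simp only [length_cons]; omega)

end SimpleGraph.Walk

namespace Q

variable {n : ℕ}

lemma hammingDist_snoc (x y : Fin n → ZMod 2) (s t : ZMod 2) :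
    hammingDist (Fin.snoc x s : Fin (n + 1) → ZMod 2) (Fin.snoc y t) =
      hammingDist x y + if s = t then 0 else 1 := by
  simp only [hammingDist, Finset.card_filter, Fin.sum_univ_castSucc, Fin.snoc_castSucc,
    Fin.snoc_last]
  simp [ite_not]

lemma cast_hammingDist (x y : Fin n → ZMod 2) :
    (hammingDist x y : ZMod 2) = ∑ i, x i + ∑ i, y i := by
  rw [hammingDist, Finset.natCast_card_filter, ← Finset.sum_add_distrib]
  refine Finset.sum_congr rfl fun i _ => ?_
  generalize x i = a
  generalize y i = b
  revert a b
  decide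

lemma hammingDist_mod_two (x y z : Fin n → ZMod 2) :
    hammingDist x z % 2 = (hammingDist x y + hammingDist y z) % 2 := by
  rw [← ZMod.natCast_eq_natCast_iff', Nat.cast_add, cast_hammingDist, cast_hammingDist,
    cast_hammingDist]
  linear_combination -CharTwo.add_self_eq_zero (∑ i, y i)

lemma cast_length_walk {u v : Fin n → ZMod 2} (p : (Q n).Walk u v) :
    (p.length : ZMod 2) = hammingDist u v := by
  induction p with
  | nil => simp
  | @cons u v w h p ih =>
    rw [length_cons, Nat.cast_succ, ih, ← Nat.cast_one, ← (h : hammingDist u v = 1)]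
    simp only [cast_hammingDist]
    linear_combination CharTwo.add_self_eq_zero (∑ i, v i)

lemma even_length_of_closed {u : Fin n → ZMod 2} (p : (Q n).Walk u u) : Even p.length := by
  rw [← ZMod.natCast_eq_zero_iff_even, cast_length_walk, hammingDist_self, Nat.cast_zero]

lemma hammingDist_lt_two_pow (x y : Fin n → ZMod 2) : hammingDist x y < 2 ^ n :=
  (hammingDist_le_card_fintype.trans_eq (Fintype.card_fin n)).trans_lt Nat.lt_two_pow_self

lemma exists_hammingDist_eq (y : Fin n → ZMod 2) {e : ℕ} (he : e ≤ n) :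
    ∃ z, hammingDist z y = e := by
  refine ⟨fun i => if (i : ℕ) < e then y i + 1 else y i, ?_⟩
  have : ∀ i : Fin n, ((if (i : ℕ) < e then y i + 1 else y i) ≠ y i ↔ (i : ℕ) < e) := by
    intro i
    split_ifs with h <;> simp [h]
  simp only [hammingDist, this, Fin.card_filter_val_lt, min_eq_right he]

def snocHom (n : ℕ) (t : ZMod 2) : Q n →g Q (n + 1) where
  toFun x := Fin.snoc x t
  map_rel' h := by
    change hammingDist _ _ = 1
    rwa [hammingDist_snoc, if_pos rfl, add_zero]

@[simp]
lemma snocHom_apply (t : ZMod 2) (x : Fin n → ZMod 2) : snocHom n t x = Fin.snoc x t := rfl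

@[simp]
lemma snocHom_last (t : ZMod 2) (x : Fin n → ZMod 2) : snocHom n t x (Fin.last n) = t := by
  simp

lemma snocHom_injective (t : ZMod 2) : Function.Injective (snocHom n t) := fun x y h => by
  simpa using congrArg Fin.init h

lemma adj_snoc_of_ne (x : Fin n → ZMod 2) {s t : ZMod 2} (h : s ≠ t) :
    (Q (n + 1)).Adj (snocHom n s x) (snocHom n t x) := by
  change hammingDist _ _ = 1
  rw [snocHom_apply, snocHom_apply, hammingDist_snoc, hammingDist_self, if_neg h]

lemma exists_isPath_snocHom_join {x y z : Fin n → ZMod 2} {s t : ZMod 2} (hst : s ≠ t)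
    {p : (Q n).Walk x y} {q : (Q n).Walk y z} (hp : p.IsPath) (hq : q.IsPath) :
    ∃ r : (Q (n + 1)).Walk (snocHom n s x) (snocHom n t z), r.IsPath ∧
      r.length = p.length + q.length + 1 ∧
      r.support = p.support.map (snocHom n s) ++ q.support.map (snocHom n t) := by
  refine ⟨(p.map (snocHom n s)).append (cons (adj_snoc_of_ne y hst) (q.map (snocHom n t))),
    (hp.map (snocHom_injective s)).append_cons_of_disjoint (hq.map (snocHom_injective t)) _ ?_,
    by simp only [length_append, length_cons, length_map]; ring, ?_⟩
  · simp only [Walk.support_map, List.disjoint_left, List.mem_map]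
    rintro _ ⟨a, -, rfl⟩ ⟨b, -, hb⟩
    exact hst (by simpa using (congrFun hb (Fin.last n)).symm)
  · rw [support_append, support_cons, List.tail_cons, Walk.support_map, Walk.support_map]

/-- Hamming distance is the graph distance of `Q n`, so this is bipanconnectedness of `Q n`. -/
def Bipanconnected (n : ℕ) : Prop :=
  ∀ u v : Fin n → ZMod 2, u ≠ v → ∀ k, hammingDist u v ≤ k → k < 2 ^ n →
    k % 2 = hammingDist u v % 2 → ∃ p : (Q n).Walk u v, p.IsPath ∧ p.length = k

namespace Bipanconnected

lemma exists_isPath_snocHom_same (ih : Bipanconnected n) {x y : Fin n → ZMod 2} (hxy : x ≠ y)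
    (s : ZMod 2) {k : ℕ} (hk₁ : hammingDist x y ≤ k) (hk₂ : k < 2 ^ (n + 1))
    (hk₃ : k % 2 = hammingDist x y % 2) :
    ∃ p : (Q (n + 1)).Walk (snocHom n s x) (snocHom n s y), p.IsPath ∧ p.length = k := by
  by_cases hsmall : k < 2 ^ n
  · obtain ⟨p, hp, rfl⟩ := ih x y hxy k hk₁ hsmall hk₃
    exact ⟨p.map (snocHom n s), hp.map (snocHom_injective s), length_map _ _⟩
  -- Take a long path `x → w → ⋯ → y` in the half `s` and replace its first edge by a path
  -- `x → ⋯ → w` through the other half.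
  have hd₀ : 0 < hammingDist x y := hammingDist_pos.2 hxy
  have hd₁ := hammingDist_lt_two_pow x y
  have hpow : 2 ^ n % 2 = 0 :=
    Nat.two_pow_mod_two_eq_zero.2 (Nat.pos_of_ne_zero (Nat.one_lt_two_pow_iff.1 (by omega)))
  rw [pow_succ] at hk₂
  obtain ⟨p₀, hp₀, hlen₀⟩ := ih x y hxy (2 ^ n - 2 + hammingDist x y % 2) (by omega) (by omega)
    (by omega)
  obtain ⟨w, hxw, q, rfl⟩ := exists_eq_cons_of_ne hxy p₀
  rw [cons_isPath_iff] at hp₀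
  rw [length_cons] at hlen₀
  have hdw : hammingDist x w = 1 := hxw
  obtain ⟨p₁, hp₁, hlen₁⟩ := ih x w hxw.ne (k - 2 ^ n + 1 - hammingDist x y % 2) (by omega)
    (by omega) (by omega)
  obtain ⟨r, hr, hlen, hsupp⟩ :=
    exists_isPath_snocHom_join (s := s + 1) (t := s) (by simp) hp₁ hp₀.1
  refine ⟨cons (adj_snoc_of_ne x (by simp)) r, hr.cons ?_, by rw [length_cons]; omega⟩
  rw [hsupp, List.mem_append, List.mem_map_of_injective (snocHom_injective s), List.mem_map]
  rintro (⟨a, -, ha⟩ | hx)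
  · simpa using congrFun ha (Fin.last n)
  · exact hp₀.2 hx

lemma exists_isPath_snocHom_of_ne (ih : Bipanconnected n) (x y : Fin n → ZMod 2) {s t : ZMod 2}
    (hst : s ≠ t) {k : ℕ} (hk₁ : hammingDist x y + 1 ≤ k) (hk₂ : k < 2 ^ (n + 1))
    (hk₃ : k % 2 = (hammingDist x y + 1) % 2) :
    ∃ p : (Q (n + 1)).Walk (snocHom n s x) (snocHom n t y), p.IsPath ∧ p.length = k := by
  rw [pow_succ] at hk₂
  by_cases hdirect : k ≤ 2 ^ n ∧ (x = y → k = 1)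
  · obtain ⟨p, hp, hlen⟩ : ∃ p : (Q n).Walk x y, p.IsPath ∧ p.length = k - 1 := by
      by_cases hxy : x = y
      · subst hxy
        exact ⟨nil, IsPath.nil, by simp [hdirect.2 rfl]⟩
      · exact ih x y hxy (k - 1) (by omega) (by omega) (by omega)
    obtain ⟨r, hr, hlen', -⟩ := exists_isPath_snocHom_join hst hp IsPath.nil
    exact ⟨r, hr, by rw [hlen', hlen, length_nil]; omega⟩
  -- Otherwise cross between the halves at a vertex `z` at distance `1` or `2` from `y`.
  have hcase : 2 ^ n < k ∨ hammingDist x y = 0 ∧ k ≠ 1 := by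
    rwa [hammingDist_eq_zero, ← not_le, ← Classical.not_imp, ← not_and_or]
  have he : 2 - k % 2 ≤ n := by
    by_contra hn
    have : n < 2 := by omega
    interval_cases n <;> omega
  obtain ⟨z, hz⟩ := exists_hammingDist_eq y he
  have hxz₁ := hammingDist_mod_two x y z
  have hxz₂ := hammingDist_triangle x y z
  have hxz₃ := hammingDist_lt_two_pow x z
  rw [hammingDist_comm y z, hz] at hxz₁ hxz₂
  have hpow : 2 ^ n % 2 = 0 := Nat.two_pow_mod_two_eq_zero.2 (by omega)
  obtain ⟨p, hp, hlen₁⟩ := ih x z (hammingDist_ne_zero.1 (by omega))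
    (k - 1 - max (2 - k % 2) (k - 2 ^ n)) (by omega) (by omega) (by omega)
  obtain ⟨q, hq, hlen₂⟩ := ih z y (hammingDist_ne_zero.1 (by omega))
    (max (2 - k % 2) (k - 2 ^ n)) (by omega) (by omega) (by omega)
  obtain ⟨r, hr, hlen, -⟩ := exists_isPath_snocHom_join hst hp hq
  exact ⟨r, hr, by omega⟩

end Bipanconnected

theorem bipanconnected : ∀ n, Bipanconnected n
  | 0 => fun u v huv => absurd (Subsingleton.elim u v) huv
  | n + 1 => by
    intro u v huv k hk₁ hk₂ hk₃
    obtain ⟨x, s, rfl⟩ : ∃ x s, snocHom n s x = u := ⟨_, _, Fin.snoc_init_self u⟩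
    obtain ⟨y, t, rfl⟩ : ∃ y t, snocHom n t y = v := ⟨_, _, Fin.snoc_init_self v⟩
    simp only [snocHom_apply, hammingDist_snoc] at hk₁ hk₃
    by_cases hst : s = t
    · subst hst
      simp only [if_true, add_zero] at hk₁ hk₃
      exact (bipanconnected n).exists_isPath_snocHom_same (fun h => huv (by rw [h])) s
        hk₁ hk₂ hk₃
    · rw [if_neg hst] at hk₁ hk₃
      exact (bipanconnected n).exists_isPath_snocHom_of_ne x y hst hk₁ hk₂ hk₃

lemma exists_isCycle_length {l : ℕ} (hl₁ : 4 ≤ l) (hl₂ : l ≤ 2 ^ n) (hl : Even l) :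
    ∃ (u : Fin n → ZMod 2) (c : (Q n).Walk u u), c.IsCycle ∧ c.length = l := by
  have hn : 1 ≤ n := by
    by_contra h
    simp [show n = 0 by omega] at hl₂
    omega
  obtain ⟨v, hv⟩ := exists_hammingDist_eq (0 : Fin n → ZMod 2) hn
  have hadj : (Q n).Adj v 0 := hv
  obtain ⟨p, hp, hlen⟩ := bipanconnected n 0 v hadj.ne.symm (l - 1)
    (by rw [hammingDist_comm]; omega) (by omega)
    (by rw [hammingDist_comm, hv]; obtain ⟨j, rfl⟩ := hl; omega)
  refine ⟨v, cons hadj p, (cons_isCycle_iff p hadj).2 ⟨hp, fun he => ?_⟩, by simp; omega⟩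
  have := hp.length_eq_one_of_mem_edges (Sym2.eq_swap ▸ he)
  omega

lemma adj_init_of_adj {u v : Fin (n + 1) → ZMod 2} (h : (Q (n + 1)).Adj u v)
    (huv : u (Fin.last n) = v (Fin.last n)) : (Q n).Adj (Fin.init u) (Fin.init v) := by
  have := hammingDist_snoc (Fin.init u) (Fin.init v) (u (Fin.last n)) (v (Fin.last n))
  rw [Fin.snoc_init_self, Fin.snoc_init_self, if_pos huv, add_zero] at this
  change hammingDist _ _ = 1
  rw [← this]
  exact h

end Q

lemma card_half (n : ℕ) (t : ZMod 2) : Nat.card (half n t) = 2 ^ n := by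
  have : half n t = Set.range (Q.snocHom n t) := by
    ext v
    refine ⟨fun hv => ⟨Fin.init v, ?_⟩, by rintro ⟨x, rfl⟩; exact Q.snocHom_last t x⟩
    rw [Q.snocHom_apply, ← (hv : v (Fin.last n) = t), Fin.snoc_init_self]
  rw [this, Nat.card_range_of_injective (Q.snocHom_injective t)]
  simp

section mix

variable {n : ℕ} {G' : (Q (n + 1)).Subgraph}

lemma le_mix : G' ≤ mix n G' := ⟨Set.subset_union_right, fun _ _ h => Or.inl h⟩

lemma card_verts_mix_le : Nat.card (mix n G').verts ≤ 2 ^ n + Nat.card G'.verts := by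
  rw [← card_half n 1, Nat.card_coe_set_eq, Nat.card_coe_set_eq, Nat.card_coe_set_eq]
  exact Set.ncard_union_le _ _

variable (n G') in
def halfOneHom : Q n →g (mix n G').coe where
  toFun x := ⟨Q.snocHom n 1 x, Or.inl (Q.snocHom_last 1 x)⟩
  map_rel' h :=
    Or.inr (Or.inl ⟨(Q.snocHom n 1).map_rel h, Q.snocHom_last 1 _, Q.snocHom_last 1 _⟩)

lemma halfOneHom_injective : Function.Injective (halfOneHom n G') := fun _ _ h =>
  Q.snocHom_injective 1 (congrArg Subtype.val h)

lemma mix_adj_snocHom_init (hhalf : G'.verts ⊆ half n 0) {v : Fin (n + 1) → ZMod 2}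
    (hv : v ∈ G'.verts) : (mix n G').Adj v (Q.snocHom n 1 (Fin.init v)) := by
  have hv₀ : Q.snocHom n 0 (Fin.init v) = v := by
    rw [Q.snocHom_apply, ← (hhalf hv : v (Fin.last n) = 0), Fin.snoc_init_self]
  refine Or.inr (Or.inr ⟨⟨?_, ?_⟩, Or.inl ⟨hv, Q.snocHom_last 1 _⟩⟩)
  · have := Q.adj_snoc_of_ne (Fin.init v) (zero_ne_one : (0 : ZMod 2) ≠ 1)
    rwa [hv₀] at this
  · rw [Q.snocHom_last, hhalf hv]
    exact zero_ne_one

lemma exists_isCycle_mix_of_isHamiltonianCycle (hhalf : G'.verts ⊆ half n 0) {v : G'.verts}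
    {c : G'.coe.Walk v v} (hc : c.IsHamiltonianCycle) {l : ℕ} (hl₁ : Nat.card G'.verts < l)
    (hl₂ : l ≤ 2 ^ n + Nat.card G'.verts) (hl : Even l) :
    ∃ (u : (mix n G').verts) (c : (mix n G').coe.Walk u u), c.IsCycle ∧ c.length = l := by
  classical
  have hm : c.length = Nat.card G'.verts := by
    rw [hc.length_eq, Nat.card_eq_fintype_card]
  have hm_even : Even c.length := length_map G'.hom c ▸ Q.even_length_of_closed (c.map G'.hom)
  have hm₃ : 3 ≤ c.length := hc.isCycle.three_le_length
  obtain ⟨w, hvw, q, rfl⟩ := not_nil_iff.mp hc.isCycle.not_nil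
  obtain ⟨hq, -⟩ := (cons_isCycle_iff q hvw).1 hc.isCycle
  rw [length_cons] at hm hm_even hm₃
  have hvw' := Q.adj_init_of_adj (G'.adj_sub hvw) ((hhalf v.2).trans (hhalf w.2).symm)
  have hd : hammingDist (Fin.init v.1) (Fin.init w.1) = 1 := hvw'
  rw [Nat.even_iff] at hl hm_even
  obtain ⟨p, hp, hlen⟩ := Q.bipanconnected n _ _ hvw'.ne (l - q.length - 2) (by omega)
    (by omega) (by omega)
  have hf : ∀ a ∈ (p.map (halfOneHom n G')).support, a.1 (Fin.last n) = 1 := by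
    simp only [Walk.support_map, List.mem_map]
    rintro _ ⟨x, -, rfl⟩
    exact Q.snocHom_last 1 x
  have hι : ∀ a ∈ (q.map (Subgraph.inclusion le_mix)).support, a.1 (Fin.last n) = 0 := by
    simp only [Walk.support_map, List.mem_map]
    rintro _ ⟨x, -, rfl⟩
    exact hhalf x.2
  have h₁ : (mix n G').coe.Adj (Subgraph.inclusion le_mix v) (halfOneHom n G' (Fin.init v.1)) :=
    mix_adj_snocHom_init hhalf v.2
  have h₂ : (mix n G').coe.Adj (halfOneHom n G' (Fin.init w.1)) (Subgraph.inclusion le_mix w) :=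
    (mix_adj_snocHom_init hhalf w.2).symm
  refine ⟨_, _, (hp.map halfOneHom_injective).isCycle_cons_append_cons
    (hq.map (Subgraph.inclusion.injective le_mix)) ?_ h₁ h₂ (by simp only [length_map]; omega),
    ?_⟩
  · exact List.disjoint_left.2 fun _ ha hb => zero_ne_one ((hι _ hb).symm.trans (hf _ ha))
  · simp only [length_append, Walk.length_cons, length_map]
    omega

end mix

theorem stmt6_general (n : ℕ) (G' : (Q (n+1)).Subgraph)
    (hhalf : G'.verts ⊆ half n 0)
    (hham : ∃ (v : G'.verts) (c : G'.coe.Walk v v), c.IsHamiltonianCycle) :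
    Bipancyclic (mix n G').coe := by
  obtain ⟨v, c, hc⟩ := hham
  intro l hl₁ hl₂ hl
  have hm : Nat.card G'.verts ≤ 2 ^ n := card_half n 0 ▸ Nat.card_mono (Set.toFinite _) hhalf
  by_cases hshort : l ≤ 2 ^ n
  · obtain ⟨u, c', hc', hlen⟩ := Q.exists_isCycle_length hl₁ hshort hl
    exact ⟨halfOneHom n G' u, c'.map _, (isCycle_map_iff_of_injective halfOneHom_injective).2 hc',
      by rw [length_map, hlen]⟩
  · exact exists_isCycle_mix_of_isHamiltonianCycle hhalf hc (by omega)
      (hl₂.trans card_verts_mix_le) hl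

/-- If `G'` is a Hamiltonian subgraph of the half `(Q_n,0)` of `Q_{n+1}` (`n ≥ 2`), `R'` the
set of cross edges between `(Q_n,1)` and `G'`, then `G = (Q_n,1) ∪ R' ∪ G'` is bipancyclic. -/
theorem stmt6 (n : ℕ) (hn : 2 ≤ n) (G' : (Q (n+1)).Subgraph)
    (hhalf : G'.verts ⊆ half n 0)
    (hham : ∃ (v : G'.verts) (c : G'.coe.Walk v v), c.IsHamiltonianCycle) :
    Bipancyclic (mix n G').coe :=
  stmt6_general n G' hhalf hham
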